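/- Let a_1 a_2 ⋯ a_n and b_1 b_2 ⋯ b_m be strings of symbols over an alphabet Σ and suppose 0 ≤ ε ≤ 1. If f̄(a_1 a_2 ⋯ a_n, b_1 b_2 ⋯ b_m) = 1 − ε, then f̃(a_1 a_2 ⋯ a_n, b_1 b_2 ⋯ b_m) ≥ 1 − 3ε. -/

import Mathlib

/-!
Dropping all but every third pair of an approximate match leaves a genuine match: each index
is paired with indices from a window of three consecutive values, so of four successive pairs
(which increase weakly in both coordinates) the last exceeds the first in both coordinates.
Hence the maximal approximate match is at most three times the maximal match, which is the
claimed inequality between `f̃` and `f̄`.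
-/

open MeasureTheory

namespace Paper

variable {σ : Type*}

/-- The concatenation of `t` copies of the string `w`. -/
def rep (w : List σ) (t : ℕ) : List σ := (List.replicate t w).flatten

/-- `I` is a match between the strings `a` and `b` (with 0-based indices):
a collection of pairs of indices, strictly increasing in both coordinates,
pairing equal symbols. -/
def IsMatch (a b : List σ) (I : List (ℕ × ℕ)) : Prop :=
  I.Chain' (fun p q => p.1 < q.1 ∧ p.2 < q.2) ∧
  ∀ p ∈ I, p.1 < a.length ∧ p.2 < b.length ∧ a[p.1]? = b[p.2]?

/-- The largest cardinality of a match between `a` and `b`. -/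
noncomputable def maxMatch (a b : List σ) : ℕ :=
  sSup {r | ∃ I, IsMatch a b I ∧ I.length = r}

/-- The `f̄` distance between two strings. -/
noncomputable def fbar (a b : List σ) : ℝ :=
  1 - 2 * (maxMatch a b : ℝ) / (a.length + b.length)

/-- `I` is an approximate match between the strings `a` and `b` (0-based indices):
pairs of indices, nondecreasing in each coordinate and strictly increasing as pairs,
pairing equal symbols, such that the set of indices paired with any given index is
contained in a set of three consecutive indices. -/
def IsApproxMatch (a b : List σ) (I : List (ℕ × ℕ)) : Prop :=
  I.Chain' (fun p q => p.1 ≤ q.1 ∧ p.2 ≤ q.2 ∧ p ≠ q) ∧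
  (∀ p ∈ I, p.1 < a.length ∧ p.2 < b.length ∧ a[p.1]? = b[p.2]?) ∧
  (∀ p ∈ I, (∃ s, ∀ q ∈ I, q.1 = p.1 → q.2 ∈ ({s, s+1, s+2} : Set ℕ)) ∧
            (∃ t, ∀ q ∈ I, q.2 = p.2 → q.1 ∈ ({t, t+1, t+2} : Set ℕ)))

/-- The largest cardinality of an approximate match between `a` and `b`. -/
noncomputable def maxApproxMatch (a b : List σ) : ℕ :=
  sSup {r | ∃ I, IsApproxMatch a b I ∧ I.length = r}

/-- The approximate distance `f̃` between two strings. -/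
noncomputable def ftilde (a b : List σ) : ℝ :=
  max 0 (1 - 2 * (maxApproxMatch a b : ℝ) / (a.length + b.length))

end Paper

open Paper List

namespace List

variable {α : Type*}

def everyThird : List α → List α
  | [] => []
  | x :: xs => x :: everyThird (xs.drop 2)
termination_by l => l.length

theorem everyThird_sublist (l : List α) : l.everyThird.Sublist l := by
  induction l using everyThird.induct with
  | case1 => simp [everyThird]
  | case2 x xs ih =>
    rw [everyThird]
    exact ih.trans (drop_sublist 2 xs) |>.cons_cons x

theorem length_le_three_mul_length_everyThird (l : List α) :
    l.length ≤ 3 * l.everyThird.length := by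
  induction l using everyThird.induct with
  | case1 => simp [everyThird]
  | case2 x xs ih =>
    rw [everyThird]
    simp only [length_cons, length_drop] at *
    omega

theorem isChain_prod_lt_iff {β : Type*} [PartialOrder α] [PartialOrder β] {l : List (α × β)} :
    l.IsChain (· < ·) ↔ l.IsChain (fun p q => p.1 ≤ q.1 ∧ p.2 ≤ q.2 ∧ p ≠ q) := by
  simp only [lt_iff_le_and_ne, Prod.le_def, and_assoc]

theorem length_le_mul_of_nodup {l : List (ℕ × ℕ)} {m n : ℕ} (hl : l.Nodup)
    (hmem : ∀ p ∈ l, p.1 < m ∧ p.2 < n) : l.length ≤ m * n := by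
  classical
  have hsub : l.toFinset ⊆ Finset.range m ×ˢ Finset.range n := fun p hp =>
    Finset.mem_product.mpr (by simpa using hmem p (mem_toFinset.mp hp))
  calc l.length = l.toFinset.card := (toFinset_card_of_nodup hl).symm
    _ ≤ (Finset.range m ×ˢ Finset.range n).card := Finset.card_le_card hsub
    _ = m * n := by simp

end List

namespace Paper

variable {σ : Type*} {a b : List σ} {I J : List (ℕ × ℕ)}

theorem IsMatch.pairwise_lt (hI : IsMatch a b I) : I.Pairwise (· < ·) :=
  (hI.1.imp fun _ _ h => Prod.lt_iff.mpr (Or.inl ⟨h.1, h.2.le⟩)).pairwise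

theorem IsApproxMatch.pairwise_lt (hI : IsApproxMatch a b I) : I.Pairwise (· < ·) :=
  (isChain_prod_lt_iff.mpr hI.1).pairwise

theorem IsApproxMatch.sublist (hI : IsApproxMatch a b I) (hJ : J.Sublist I) :
    IsApproxMatch a b J := by
  have hchain := isChain_prod_lt_iff.mp (hI.pairwise_lt.sublist hJ).isChain
  obtain ⟨-, hsym, hwin⟩ := hI
  refine ⟨hchain, fun p hp => hsym p (hJ.subset hp), fun p hp => ?_⟩
  obtain ⟨⟨s, hs⟩, ⟨t, ht⟩⟩ := hwin p (hJ.subset hp)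
  exact ⟨⟨s, fun q hq => hs q (hJ.subset hq)⟩, ⟨t, fun q hq => ht q (hJ.subset hq)⟩⟩

/-- If `p < y₀ < y₁ < q` shared a coordinate, the other one would increase by at least three
from `p` to `q`, so `p` and `q` could not both lie in the window of `p`. -/
theorem IsApproxMatch.lt_of_mem_drop_two {p q : ℕ × ℕ} (hI : IsApproxMatch a b (p :: I))
    (hq : q ∈ I.drop 2) : p.1 < q.1 ∧ p.2 < q.2 := by
  obtain _ | ⟨y₀, _ | ⟨y₁, I⟩⟩ := I
  · simp at hq
  · simp at hq
  simp only [drop_succ_cons, drop_zero] at hq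
  have hlt := hI.pairwise_lt
  simp only [pairwise_cons, mem_cons] at hlt
  have hpy₀ := Prod.lt_iff.mp (hlt.1 y₀ (Or.inl rfl))
  have hy₀y₁ := Prod.lt_iff.mp (hlt.2.1 y₁ (Or.inl rfl))
  have hy₁q := Prod.lt_iff.mp (hlt.2.2.1 q hq)
  obtain ⟨⟨s, hs⟩, ⟨t, ht⟩⟩ := hI.2.2 p (by simp)
  have hpI : p ∈ p :: y₀ :: y₁ :: I := mem_cons_self
  have hqI : q ∈ p :: y₀ :: y₁ :: I := by simp [hq]
  simp only [Set.mem_insert_iff, Set.mem_singleton_iff] at hs ht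
  constructor
  · by_contra hle
    have hsq := hs q hqI (by omega)
    have hsp := hs p hpI rfl
    omega
  · by_contra hle
    have htq := ht q hqI (by omega)
    have htp := ht p hpI rfl
    omega

theorem IsApproxMatch.isMatch_everyThird (hI : IsApproxMatch a b I) :
    IsMatch a b I.everyThird := by
  induction I using everyThird.induct with
  | case1 => rw [everyThird]; exact ⟨isChain_nil, by simp⟩
  | case2 p I ih =>
    have ⟨hchain, hmem⟩ := ih (hI.sublist ((drop_sublist 2 I).trans (sublist_cons_self p I)))
    rw [everyThird]
    refine ⟨isChain_cons.mpr ⟨fun q hq => ?_, hchain⟩, ?_⟩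
    · exact hI.lt_of_mem_drop_two ((everyThird_sublist _).subset (mem_of_mem_head? hq))
    · rintro q (_ | ⟨_, hq⟩)
      exacts [hI.2.1 p mem_cons_self, hmem q hq]

theorem bddAbove_isMatch_lengths (a b : List σ) :
    BddAbove {r | ∃ I, IsMatch a b I ∧ I.length = r} := by
  refine ⟨a.length * b.length, ?_⟩
  rintro r ⟨I, hI, rfl⟩
  exact length_le_mul_of_nodup hI.pairwise_lt.nodup fun p hp => ⟨(hI.2 p hp).1, (hI.2 p hp).2.1⟩

theorem exists_isApproxMatch_length_eq_maxApproxMatch (a b : List σ) :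
    ∃ I, IsApproxMatch a b I ∧ I.length = maxApproxMatch a b := by
  refine Nat.sSup_mem (s := {r | ∃ I, IsApproxMatch a b I ∧ I.length = r})
    ⟨0, [], ⟨isChain_nil, by simp, by simp⟩, rfl⟩ ⟨a.length * b.length, ?_⟩
  rintro r ⟨I, hI, rfl⟩
  exact length_le_mul_of_nodup hI.pairwise_lt.nodup
    fun p hp => ⟨(hI.2.1 p hp).1, (hI.2.1 p hp).2.1⟩

theorem maxApproxMatch_le_three_mul_maxMatch (a b : List σ) :
    maxApproxMatch a b ≤ 3 * maxMatch a b := by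
  obtain ⟨I, hI, hlen⟩ := exists_isApproxMatch_length_eq_maxApproxMatch a b
  have hthird : I.everyThird.length ≤ maxMatch a b :=
    le_csSup (bddAbove_isMatch_lengths a b) ⟨_, hI.isMatch_everyThird, rfl⟩
  calc maxApproxMatch a b = I.length := hlen.symm
    _ ≤ 3 * I.everyThird.length := length_le_three_mul_length_everyThird I
    _ ≤ 3 * maxMatch a b := by omega

theorem one_sub_three_mul_le_ftilde (a b : List σ) : 1 - 3 * (1 - fbar a b) ≤ ftilde a b := by
  have hle : (2 * maxApproxMatch a b : ℝ) ≤ 3 * (2 * maxMatch a b) := by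
    have := maxApproxMatch_le_three_mul_maxMatch a b
    norm_cast
    omega
  have hdiv := div_le_div_of_nonneg_right hle (by positivity : (0 : ℝ) ≤ a.length + b.length)
  rw [mul_div_assoc (3 : ℝ)] at hdiv
  exact le_max_of_le_right (by unfold fbar; linarith)

end Paper

theorem statement10_general {σ : Type*} (a b : List σ) (ε : ℝ)
    (h : fbar a b = 1 - ε) :
    1 - 3 * ε ≤ ftilde a b := by
  simpa [h] using one_sub_three_mul_le_ftilde a b

/-- If `f̄(a,b) = 1 − ε` with `0 ≤ ε ≤ 1`, then `f̃(a,b) ≥ 1 − 3ε`. -/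
theorem statement10 {σ : Type*} (a b : List σ) (ε : ℝ) (h0 : 0 ≤ ε) (h1 : ε ≤ 1)
    (h : fbar a b = 1 - ε) :
    1 - 3 * ε ≤ ftilde a b :=
  statement10_general a b ε h
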